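/- For any positive integer d and any nonincreasing positive integer sequence D of length n with maximum entry d and even sum: if n < d², write n = qL + r with L = d² and 0 ≤ r < L; then the blocks of D of length L (with the last block of length L + r), after pairing odd-sum blocks, each have even sum and length between L and 3L. -/

import Mathlib

/-- The multiset of vertex degrees of a finite simple graph. -/
noncomputable def degreeMultiset {V : Type} [Fintype V] (G : SimpleGraph V) : Multiset ℕ :=
  Finset.univ.val.map fun v => (G.neighborSet v).ncard

/-- A multiset of natural numbers is graphic if it is the degree multiset of
some finite simple graph. -/
def IsGraphic (D : Multiset ℕ) : Prop :=
  ∃ (n : ℕ) (G : SimpleGraph (Fin n)), degreeMultiset G = D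

/-- The Rao order: some realization of `D₁` is an induced subgraph of some
realization of `D₂`. -/
def RaoLE (D₁ D₂ : Multiset ℕ) : Prop :=
  ∃ (m n : ℕ) (G : SimpleGraph (Fin m)) (H : SimpleGraph (Fin n)) (f : Fin m ↪ Fin n),
    degreeMultiset G = D₁ ∧ degreeMultiset H = D₂ ∧
    ∀ u v : Fin m, G.Adj u v ↔ H.Adj (f u) (f v)

/-- The index set of the `i`-th consecutive block of length `L = d²` of `{0, …, n-1}`
(the last of the `q = n / L` blocks also absorbs the remainder `r = n % L`). -/
def blockIdx (n L q : ℕ) (i : Fin q) : Finset ℕ :=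
  if (i : ℕ) = q - 1 then Finset.Ico ((i : ℕ) * L) n
  else Finset.Ico ((i : ℕ) * L) (((i : ℕ) + 1) * L)

lemma aux_telescope (L : ℕ) (f : ℕ → ℕ) (m : ℕ) :
    ∑ i ∈ Finset.range m, ∑ j ∈ Finset.Ico (i * L) ((i + 1) * L), f j
      = ∑ j ∈ Finset.range (m * L), f j := by
  induction m with
  | zero => simp
  | succ k ih =>
    rw [Finset.sum_range_succ, ih, Finset.range_eq_Ico, Finset.range_eq_Ico]
    exact Finset.sum_Ico_consecutive f (Nat.zero_le _)
      (Nat.mul_le_mul_right L (Nat.le_succ k))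

lemma aux_even_sum_iff {α : Type*} [DecidableEq α] (f : α → ℕ) (s : Finset α) :
    (Even (∑ i ∈ s, f i)) ↔ Even ((s.filter fun i => ¬ Even (f i)).card) := by
  classical
  induction s using Finset.induction_on with
  | empty => simp
  | insert _ _ ha ih =>
    rename_i a s
    rw [Finset.sum_insert ha, Nat.even_add, ih, Finset.filter_insert]
    by_cases hfa : Even (f a)
    · simp [hfa]
    · have hnm : a ∉ s.filter fun i => ¬ Even (f i) :=
        fun h => ha (Finset.mem_filter.mp h).1
      rw [if_pos hfa, Finset.card_insert_of_notMem hnm, Nat.even_add_one]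
      tauto

lemma aux_matching {α : Type*} [DecidableEq α] :
    ∀ S : Finset α, Even S.card →
      ∃ P : Finset (Finset α), (∀ i ∈ S, ∃! g, g ∈ P ∧ i ∈ g) ∧
        ∀ g ∈ P, g.card = 2 ∧ g ⊆ S := by
  intro S
  induction S using Finset.strongInduction with
  | _ S ih =>
    intro hS
    rcases S.eq_empty_or_nonempty with rfl | ⟨a, ha⟩
    · exact ⟨∅, by simp, by simp⟩
    · have h2 : 2 ≤ S.card := by
        have h1 : 1 ≤ S.card := Finset.card_pos.mpr ⟨a, ha⟩
        rcases hS with ⟨k, hk⟩; omega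
      have hpos : 0 < (S.erase a).card := by
        rw [Finset.card_erase_of_mem ha]; omega
      obtain ⟨b, hb⟩ := Finset.card_pos.mp hpos
      have hba : b ≠ a := (Finset.mem_erase.mp hb).1
      have hbS : b ∈ S := (Finset.mem_erase.mp hb).2
      set T := (S.erase a).erase b with hTdef
      have haT : a ∉ T := fun h => ((Finset.mem_erase.mp (Finset.mem_erase.mp h).2).1) rfl
      have hbT : b ∉ T := fun h => (Finset.mem_erase.mp h).1 rfl
      have hTS : T ⊆ S := fun x hx =>
        (Finset.mem_erase.mp (Finset.mem_erase.mp hx).2).2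
      have hTssub : T ⊂ S := ⟨hTS, fun h => haT (h ha)⟩
      have hTcard : T.card = S.card - 2 := by
        rw [hTdef, Finset.card_erase_of_mem hb, Finset.card_erase_of_mem ha]; omega
      have hTeven : Even T.card := by
        rcases hS with ⟨k, hk⟩
        exact ⟨k - 1, by omega⟩
      obtain ⟨P, hP1, hP2⟩ := ih T hTssub hTeven
      have hmemT : ∀ i, i ∈ T ↔ i ≠ b ∧ i ≠ a ∧ i ∈ S := by
        intro i; simp [hTdef, Finset.mem_erase, and_assoc]
      refine ⟨insert {a, b} P, ?_, ?_⟩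
      · intro i hiS
        by_cases hiT : i ∈ T
        · obtain ⟨g, ⟨hgP, hig⟩, huniq⟩ := hP1 i hiT
          refine ⟨g, ⟨Finset.mem_insert_of_mem hgP, hig⟩, ?_⟩
          rintro g' ⟨hg', hig'⟩
          rcases Finset.mem_insert.mp hg' with rfl | hg'P
          · exfalso
            rcases Finset.mem_insert.mp hig' with rfl | h
            · exact haT hiT
            · rw [Finset.mem_singleton.mp h] at hiT; exact hbT hiT
          · exact huniq g' ⟨hg'P, hig'⟩
        · have hiab : i = a ∨ i = b := by
            have h := (hmemT i).not.mp hiT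
            by_cases h1 : i = a
            · exact Or.inl h1
            · by_cases h2 : i = b
              · exact Or.inr h2
              · exact absurd ⟨h2, h1, hiS⟩ h
          refine ⟨{a, b}, ⟨Finset.mem_insert_self _ _, ?_⟩, ?_⟩
          · rcases hiab with rfl | rfl
            · exact Finset.mem_insert_self _ _
            · exact Finset.mem_insert_of_mem (Finset.mem_singleton_self _)
          · rintro g' ⟨hg', hig'⟩
            rcases Finset.mem_insert.mp hg' with rfl | hg'P
            · rfl
            · exfalso
              have : i ∈ T := (hP2 g' hg'P).2 hig'
              exact hiT this
      · intro g hg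
        rcases Finset.mem_insert.mp hg with rfl | hgP
        · refine ⟨Finset.card_pair hba.symm, ?_⟩
          intro x hx
          rcases Finset.mem_insert.mp hx with rfl | hx
          · exact ha
          · rw [Finset.mem_singleton.mp hx]; exact hbS
        · exact ⟨(hP2 g hgP).1, (hP2 g hgP).2.trans hTS⟩

/-- Splitting a bounded nonincreasing positive sequence with even sum into consecutive
blocks of length `L = d²` (last block of length `L + r`), the odd-sum blocks can be
paired so that every resulting group has even sum and length between `L` and `3L`. -/
theorem stmt19 (d n : ℕ) (hd : 1 ≤ d) (D : ℕ → ℕ)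
    (hmono : ∀ i j, i ≤ j → j < n → D j ≤ D i)
    (hpos : ∀ i, i < n → 1 ≤ D i)
    (hbdd : ∀ i, i < n → D i ≤ d)
    (hmax : D 0 = d)
    (hn : d ^ 2 ≤ n)
    (heven : Even (∑ i ∈ Finset.range n, D i)) :
    ∃ P : Finset (Finset (Fin (n / d ^ 2))),
      (∀ i : Fin (n / d ^ 2), ∃! g, g ∈ P ∧ i ∈ g) ∧
      (∀ g ∈ P, g.card = 1 ∨ g.card = 2) ∧
      (∀ g ∈ P,
        Even (∑ i ∈ g, ∑ j ∈ blockIdx n (d ^ 2) (n / d ^ 2) i, D j) ∧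
        d ^ 2 ≤ ∑ i ∈ g, (blockIdx n (d ^ 2) (n / d ^ 2) i).card ∧
        ∑ i ∈ g, (blockIdx n (d ^ 2) (n / d ^ 2) i).card ≤ 3 * d ^ 2) := by
  classical
  set L := d ^ 2 with hLdef
  set q := n / L with hqdef
  have hL : 0 < L := by positivity
  have hq1 : 1 ≤ q := (Nat.one_le_div_iff hL).mpr hn
  have hdm : q * L + n % L = n := by rw [mul_comm]; exact Nat.div_add_mod n L
  have hmod : n % L < L := Nat.mod_lt _ hL
  have hq1L : (q - 1) * L + L = q * L := by
    obtain ⟨k, hk⟩ : ∃ k, q = k + 1 := ⟨q - 1, by omega⟩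
    rw [hk]; simp [add_mul]
  -- cardinality of each block
  have hcardb : ∀ i : Fin q, (blockIdx n L q i).card
      = if (i : ℕ) = q - 1 then L + n % L else L := by
    intro i
    rw [blockIdx]
    split_ifs with h
    · rw [Nat.card_Ico, h]; omega
    · rw [Nat.card_Ico, add_mul, one_mul]; omega
  have hlb : ∀ i : Fin q, L ≤ (blockIdx n L q i).card := by
    intro i; rw [hcardb]; split_ifs <;> omega
  have hub : ∀ i : Fin q, (blockIdx n L q i).card ≤ L + n % L := by
    intro i; rw [hcardb]; split_ifs <;> omega
  -- the sum of the blocks is the total sum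
  set F : ℕ → ℕ := fun m =>
    ∑ j ∈ (if m = q - 1 then Finset.Ico (m * L) n
      else Finset.Ico (m * L) ((m + 1) * L)), D j with hF
  have hFi : ∀ i : Fin q, (∑ j ∈ blockIdx n L q i, D j) = F (i : ℕ) := fun i => rfl
  have hFsum : ∑ i ∈ Finset.range q, F i = ∑ j ∈ Finset.range n, D j := by
    have hsplit : ∑ i ∈ Finset.range q, F i
        = ∑ i ∈ Finset.range (q - 1), F i + F (q - 1) := by
      conv_lhs => rw [show q = (q - 1) + 1 from by omega]
      rw [Finset.sum_range_succ]
    rw [hsplit]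
    have h1 : ∀ i ∈ Finset.range (q - 1),
        F i = ∑ j ∈ Finset.Ico (i * L) ((i + 1) * L), D j := by
      intro i hi
      have hi' : i < q - 1 := Finset.mem_range.mp hi
      simp only [hF]
      rw [if_neg (by omega)]
    have hlastF : F (q - 1) = ∑ j ∈ Finset.Ico ((q - 1) * L) n, D j := by
      simp [hF]
    rw [Finset.sum_congr rfl h1, aux_telescope, hlastF, Finset.range_eq_Ico, Finset.range_eq_Ico]
    exact Finset.sum_Ico_consecutive D (Nat.zero_le _) (by omega)
  have htotFin : ∑ i : Fin q, ∑ j ∈ blockIdx n L q i, D j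
      = ∑ j ∈ Finset.range n, D j := by
    rw [Finset.sum_congr rfl (fun i _ => hFi i), Fin.sum_univ_eq_sum_range F q, hFsum]
  -- the set of odd-sum blocks has even cardinality
  set S : Finset (Fin q) :=
    Finset.univ.filter (fun i => ¬ Even (∑ j ∈ blockIdx n L q i, D j)) with hSdef
  have hSeven : Even S.card := by
    refine (aux_even_sum_iff (fun i : Fin q => ∑ j ∈ blockIdx n L q i, D j)
      Finset.univ).mp ?_
    rw [htotFin]; exact heven
  obtain ⟨M, hM1, hM2⟩ := aux_matching S hSeven
  have hSodd : ∀ i : Fin q, i ∈ S ↔ ¬ Even (∑ j ∈ blockIdx n L q i, D j) := by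
    intro i
    rw [hSdef, Finset.mem_filter]
    simp
  refine ⟨M ∪ (Finset.univ \ S).image (fun i => {i}), ?_, ?_, ?_⟩
  · -- partition property
    intro i
    by_cases hi : i ∈ S
    · obtain ⟨g, ⟨hgM, hig⟩, huniq⟩ := hM1 i hi
      refine ⟨g, ⟨Finset.mem_union_left _ hgM, hig⟩, ?_⟩
      rintro g' ⟨hg', hig'⟩
      rcases Finset.mem_union.mp hg' with h | h
      · exact huniq g' ⟨h, hig'⟩
      · exfalso
        obtain ⟨j, hj, rfl⟩ := Finset.mem_image.mp h
        have hij : i = j := Finset.mem_singleton.mp hig'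
        exact (Finset.mem_sdiff.mp hj).2 (hij ▸ hi)
    · refine ⟨{i}, ⟨Finset.mem_union_right _ (Finset.mem_image.mpr
        ⟨i, Finset.mem_sdiff.mpr ⟨Finset.mem_univ i, hi⟩, rfl⟩),
        Finset.mem_singleton_self i⟩, ?_⟩
      rintro g' ⟨hg', hig'⟩
      rcases Finset.mem_union.mp hg' with h | h
      · exact absurd ((hM2 g' h).2 hig') hi
      · obtain ⟨j, hj, rfl⟩ := Finset.mem_image.mp h
        rw [Finset.mem_singleton.mp hig']
  · -- cardinalities 1 or 2
    intro g hg
    rcases Finset.mem_union.mp hg with h | h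
    · exact Or.inr (hM2 g h).1
    · obtain ⟨j, _, rfl⟩ := Finset.mem_image.mp h
      exact Or.inl (Finset.card_singleton j)
  · -- even sums and size bounds
    intro g hg
    rcases Finset.mem_union.mp hg with h | h
    · obtain ⟨hc2, hgS⟩ := hM2 g h
      obtain ⟨x, y, hxy, rfl⟩ := Finset.card_eq_two.mp hc2
      have hx : x ∈ S := hgS (Finset.mem_insert_self _ _)
      have hy : y ∈ S := hgS (Finset.mem_insert_of_mem (Finset.mem_singleton_self _))
      have hox : ¬ Even (∑ j ∈ blockIdx n L q x, D j) := (hSodd x).mp hx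
      have hoy : ¬ Even (∑ j ∈ blockIdx n L q y, D j) := (hSodd y).mp hy
      have hne : (x : ℕ) ≠ q - 1 ∨ (y : ℕ) ≠ q - 1 := by
        by_contra hcon
        push_neg at hcon
        exact hxy (Fin.ext (hcon.1.trans hcon.2.symm))
      refine ⟨?_, ?_, ?_⟩
      · rw [Finset.sum_pair hxy]
        exact Nat.even_add.mpr (iff_of_false hox hoy)
      · rw [Finset.sum_pair hxy]
        have := hlb x
        have := hlb y
        omega
      · rw [Finset.sum_pair hxy]
        rcases hne with hne | hne
        · rw [hcardb x, if_neg hne, hcardb y]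
          split_ifs <;> omega
        · rw [hcardb y, if_neg hne, hcardb x]
          split_ifs <;> omega
    · obtain ⟨j, hj, rfl⟩ := Finset.mem_image.mp h
      have hjS : j ∉ S := (Finset.mem_sdiff.mp hj).2
      have hej : Even (∑ k ∈ blockIdx n L q j, D k) := by
        by_contra hc
        exact hjS ((hSodd j).mpr hc)
      refine ⟨by simpa using hej, ?_, ?_⟩
      · rw [Finset.sum_singleton]
        exact hlb j
      · rw [Finset.sum_singleton, hcardb j]
        split_ifs <;> omega
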